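/- Let Y_j, Y_k be two responses with missingness indicators I_j, I_k, conditional observation probabilities π_j = P(I_j=1|X) > 0, π_k = P(I_k=1|X) > 0, and joint observation probability q_{jk} = P(I_j=1, I_k=1|X). Assume (Y_j,Y_k) is conditionally independent of (I_j,I_k) given X. Set Y*_j = Y_j I_j/π_j and Y*_k = Y_k I_k/π_k, μ_j = E[Y_j|X], μ_k = E[Y_k|X], σ_{jk} = Cov(Y_j, Y_k | X). Then Cov(Y*_j, Y*_k | X) = σ_{jk} + (q_{jk}/(π_j π_k) − 1)(σ_{jk} + μ_j μ_k). -/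

import Mathlib

open MeasureTheory ProbabilityTheory Set

section Aux

variable {Ω : Type*} {mΩ : MeasurableSpace Ω} [StandardBorelSpace Ω]
  {μ : Measure Ω} [IsProbabilityMeasure μ]


lemma ae_indepFun_of_condIndepFun' (mX : MeasurableSpace Ω) (hmX : mX ≤ mΩ)
    {f g : Ω → ℝ} (hf : Measurable[mΩ] f) (hg : Measurable[mΩ] g)
    (h : CondIndepFun mX hmX f g μ) :
    ∀ᵐ ω ∂μ, IndepFun f g (@condExpKernel Ω mΩ _ μ _ mX ω) := by
  have h' : ∀ q r : ℚ, ∀ᵐ ω ∂μ,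
      @condExpKernel Ω mΩ _ μ _ mX ω (f ⁻¹' Iic (q : ℝ) ∩ g ⁻¹' Iic (r : ℝ))
        = @condExpKernel Ω mΩ _ μ _ mX ω (f ⁻¹' Iic (q : ℝ))
          * @condExpKernel Ω mΩ _ μ _ mX ω (g ⁻¹' Iic (r : ℝ)) := fun q r =>
    ae_of_ae_trim hmX
      (h (f ⁻¹' Iic (q : ℝ)) (g ⁻¹' Iic (r : ℝ))
        ⟨Iic (q : ℝ), measurableSet_Iic, rfl⟩ ⟨Iic (r : ℝ), measurableSet_Iic, rfl⟩)
  have h'' : ∀ᵐ ω ∂μ, ∀ q r : ℚ,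
      @condExpKernel Ω mΩ _ μ _ mX ω (f ⁻¹' Iic (q : ℝ) ∩ g ⁻¹' Iic (r : ℝ))
        = @condExpKernel Ω mΩ _ μ _ mX ω (f ⁻¹' Iic (q : ℝ))
          * @condExpKernel Ω mΩ _ μ _ mX ω (g ⁻¹' Iic (r : ℝ)) := by
    rw [ae_all_iff]
    intro q
    rw [ae_all_iff]
    exact h' q
  filter_upwards [h''] with ω hω
  have hreal : (inferInstance : MeasurableSpace ℝ)
      = MeasurableSpace.generateFrom (⋃ a : ℚ, {Iic (a : ℝ)}) := by
    rw [← Real.borel_eq_generateFrom_Iic_rat]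
    exact BorelSpace.measurable_eq
  have hpi := Real.isPiSystem_Iic_rat
  have hSets : IndepSets (preimage f '' (⋃ a : ℚ, {Iic (a : ℝ)}))
      (preimage g '' (⋃ a : ℚ, {Iic (a : ℝ)})) (@condExpKernel Ω mΩ _ μ _ mX ω) := by
    rw [IndepSets_iff]
    rintro t1 t2 ⟨s1, hs1, rfl⟩ ⟨s2, hs2, rfl⟩
    simp only [mem_iUnion, mem_singleton_iff] at hs1 hs2
    obtain ⟨qq, rfl⟩ := hs1
    obtain ⟨rr, rfl⟩ := hs2
    exact hω qq rr
  have hind : Indep (MeasurableSpace.comap f inferInstance)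
      (MeasurableSpace.comap g inferInstance) (@condExpKernel Ω mΩ _ μ _ mX ω) := by
    refine IndepSets.indep hf.comap_le hg.comap_le (hpi.comap f) (hpi.comap g) ?_ ?_ hSets
    · rw [hreal, MeasurableSpace.comap_generateFrom]; rfl
    · rw [hreal, MeasurableSpace.comap_generateFrom]; rfl
  exact hind

lemma condExp_mul_of_condIndepFun' (mX : MeasurableSpace Ω) (hmX : mX ≤ mΩ)
    {f g : Ω → ℝ} (hf : Measurable[mΩ] f) (hg : Measurable[mΩ] g)
    (h : CondIndepFun mX hmX f g μ)
    (hfi : Integrable f μ) (hgi : Integrable g μ)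
    (hfgi : Integrable (fun ω => f ω * g ω) μ) :
    μ[fun ω => f ω * g ω | mX] =ᵐ[μ] fun ω => (μ[f | mX]) ω * (μ[g | mX]) ω := by
  filter_upwards [condExp_ae_eq_integral_condExpKernel (mΩ := mΩ) hmX hfgi,
    condExp_ae_eq_integral_condExpKernel (mΩ := mΩ) hmX hfi,
    condExp_ae_eq_integral_condExpKernel (mΩ := mΩ) hmX hgi,
    ae_indepFun_of_condIndepFun' mX hmX hf hg h] with ω e1 e2 e3 hind
  rw [e1, e2, e3]
  exact hind.integral_mul_eq_mul_integral hf.aestronglyMeasurable hg.aestronglyMeasurable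

end Aux

/-- conditional covariance of the inverse probability weighted responses
`Y*_j = Y_j I_j / π_j`, `Y*_k = Y_k I_k / π_k`:
`Cov(Y*_j, Y*_k | X) = σ_{jk} + (q_{jk}/(π_j π_k) − 1)(σ_{jk} + μ_j μ_k)`,
where conditioning on `X` is modelled by the sub-σ-algebra `mX`. -/
theorem condCov_ipw {Ω : Type*} (mX : MeasurableSpace Ω) {mΩ : MeasurableSpace Ω} [StandardBorelSpace Ω]
    {μ : Measure Ω} [IsProbabilityMeasure μ]
    (hmX : mX ≤ mΩ)
    (Yj Yk Ij Ik : Ω → ℝ) (hYj : Measurable Yj) (hYk : Measurable Yk)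
    (hIj : Measurable Ij) (hIk : Measurable Ik)
    (hIj01 : ∀ ω, Ij ω = 0 ∨ Ij ω = 1) (hIk01 : ∀ ω, Ik ω = 0 ∨ Ik ω = 1)
    (πj πk q : Ω → ℝ)
    (hπj : πj =ᵐ[μ] μ[Ij | mX]) (hπk : πk =ᵐ[μ] μ[Ik | mX])
    (hπjpos : ∀ᵐ ω ∂μ, 0 < πj ω) (hπkpos : ∀ᵐ ω ∂μ, 0 < πk ω)
    (hq : q =ᵐ[μ] μ[fun ω => Ij ω * Ik ω | mX])
    (hindep : CondIndepFun mX hmX (fun ω => (Yj ω, Yk ω)) (fun ω => (Ij ω, Ik ω)) μ)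
    (μj μk σjk : Ω → ℝ)
    (hμj : μj =ᵐ[μ] μ[Yj | mX]) (hμk : μk =ᵐ[μ] μ[Yk | mX])
    (hσjk : σjk =ᵐ[μ] fun ω => (μ[fun ω' => Yj ω' * Yk ω' | mX]) ω - μj ω * μk ω)
    (hYjint : Integrable Yj μ) (hYkint : Integrable Yk μ)
    (hYjkint : Integrable (fun ω => Yj ω * Yk ω) μ)
    (hYsjint : Integrable (fun ω => Yj ω * Ij ω / πj ω) μ)
    (hYskint : Integrable (fun ω => Yk ω * Ik ω / πk ω) μ)
    (hYsjkint : Integrable (fun ω => (Yj ω * Ij ω / πj ω) * (Yk ω * Ik ω / πk ω)) μ) :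
    (fun ω => (μ[fun ω' => (Yj ω' * Ij ω' / πj ω') * (Yk ω' * Ik ω' / πk ω') | mX]) ω
        - (μ[fun ω' => Yj ω' * Ij ω' / πj ω' | mX]) ω * (μ[fun ω' => Yk ω' * Ik ω' / πk ω' | mX]) ω)
      =ᵐ[μ] fun ω =>
        σjk ω + (q ω / (πj ω * πk ω) - 1) * (σjk ω + μj ω * μk ω) := by
  have hYjm : Measurable[mΩ] Yj := hYj
  have hYkm : Measurable[mΩ] Yk := hYk
  have hIjm : Measurable[mΩ] Ij := hIj
  have hIkm : Measurable[mΩ] Ik := hIk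
  -- boundedness of the indicators
  have hIjb : ∀ ω, ‖Ij ω‖ ≤ 1 := fun ω => by rcases hIj01 ω with h | h <;> simp [h]
  have hIkb : ∀ ω, ‖Ik ω‖ ≤ 1 := fun ω => by rcases hIk01 ω with h | h <;> simp [h]
  have hIIb : ∀ ω, ‖Ij ω * Ik ω‖ ≤ 1 := fun ω => by
    rcases hIj01 ω with h | h <;> rcases hIk01 ω with h' | h' <;> simp [h, h']
  -- integrability facts
  have hIjint : Integrable Ij μ :=
    Integrable.mono' (integrable_const 1) hIjm.aestronglyMeasurable (Filter.Eventually.of_forall hIjb)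
  have hIkint : Integrable Ik μ :=
    Integrable.mono' (integrable_const 1) hIkm.aestronglyMeasurable (Filter.Eventually.of_forall hIkb)
  have hIjkint : Integrable (fun ω => Ij ω * Ik ω) μ :=
    Integrable.bdd_mul hIkint hIjm.aestronglyMeasurable (Filter.Eventually.of_forall hIjb)
  have hYjIj : Integrable (fun ω => Yj ω * Ij ω) μ :=
    (Integrable.bdd_mul hYjint hIjm.aestronglyMeasurable (Filter.Eventually.of_forall hIjb)).congr
      (Filter.Eventually.of_forall fun ω => mul_comm _ _)
  have hYkIk : Integrable (fun ω => Yk ω * Ik ω) μ :=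
    (Integrable.bdd_mul hYkint hIkm.aestronglyMeasurable (Filter.Eventually.of_forall hIkb)).congr
      (Filter.Eventually.of_forall fun ω => mul_comm _ _)
  have hprodint : Integrable (fun ω => (Yj ω * Yk ω) * (Ij ω * Ik ω)) μ :=
    (Integrable.bdd_mul hYjkint (hIjm.mul hIkm).aestronglyMeasurable (Filter.Eventually.of_forall hIIb)).congr
      (Filter.Eventually.of_forall fun ω => mul_comm _ _)
  -- conditional independence of the relevant pairs
  have hmulm : Measurable fun p : ℝ × ℝ => p.1 * p.2 := measurable_fst.mul measurable_snd
  have ci1 : CondIndepFun mX hmX Yj Ij μ := hindep.comp measurable_fst measurable_fst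
  have ci2 : CondIndepFun mX hmX Yk Ik μ := hindep.comp measurable_snd measurable_snd
  have ci3 : CondIndepFun mX hmX (fun ω => Yj ω * Yk ω) (fun ω => Ij ω * Ik ω) μ :=
    hindep.comp hmulm hmulm
  -- conditional expectations of products factorize
  have e1 : μ[fun ω => Yj ω * Ij ω | mX] =ᵐ[μ]
      fun ω => (μ[Yj | mX]) ω * (μ[Ij | mX]) ω :=
    condExp_mul_of_condIndepFun' mX hmX hYjm hIjm ci1 hYjint hIjint hYjIj
  have e2 : μ[fun ω => Yk ω * Ik ω | mX] =ᵐ[μ]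
      fun ω => (μ[Yk | mX]) ω * (μ[Ik | mX]) ω :=
    condExp_mul_of_condIndepFun' mX hmX hYkm hIkm ci2 hYkint hIkint hYkIk
  have e3 : μ[fun ω => (Yj ω * Yk ω) * (Ij ω * Ik ω) | mX] =ᵐ[μ]
      fun ω => (μ[fun ω' => Yj ω' * Yk ω' | mX]) ω * (μ[fun ω' => Ij ω' * Ik ω' | mX]) ω :=
    condExp_mul_of_condIndepFun' mX hmX (hYjm.mul hYkm) (hIjm.mul hIkm) ci3 hYjkint hIjkint hprodint
  -- pull out the `mX`-measurable weights
  have hsma : StronglyMeasurable[mX] (fun ω => ((μ[Ij | mX]) ω)⁻¹) :=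
    ((stronglyMeasurable_condExp (m := mX) (f := Ij)).measurable.inv).stronglyMeasurable
  have hsmb : StronglyMeasurable[mX] (fun ω => ((μ[Ik | mX]) ω)⁻¹) :=
    ((stronglyMeasurable_condExp (m := mX) (f := Ik)).measurable.inv).stronglyMeasurable
  have hsmab : StronglyMeasurable[mX] (fun ω => ((μ[Ij | mX]) ω * (μ[Ik | mX]) ω)⁻¹) :=
    (((stronglyMeasurable_condExp (m := mX) (f := Ij)).measurable.mul
      (stronglyMeasurable_condExp (m := mX) (f := Ik)).measurable).inv).stronglyMeasurable
  have g1 : (fun ω => Yj ω * Ij ω / πj ω) =ᵐ[μ]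
      fun ω => ((μ[Ij | mX]) ω)⁻¹ * (Yj ω * Ij ω) := by
    filter_upwards [hπj] with ω hω
    rw [hω, div_eq_inv_mul]
  have g2 : (fun ω => Yk ω * Ik ω / πk ω) =ᵐ[μ]
      fun ω => ((μ[Ik | mX]) ω)⁻¹ * (Yk ω * Ik ω) := by
    filter_upwards [hπk] with ω hω
    rw [hω, div_eq_inv_mul]
  have g3 : (fun ω => (Yj ω * Ij ω / πj ω) * (Yk ω * Ik ω / πk ω)) =ᵐ[μ]
      fun ω => ((μ[Ij | mX]) ω * (μ[Ik | mX]) ω)⁻¹ * ((Yj ω * Yk ω) * (Ij ω * Ik ω)) := by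
    filter_upwards [hπj, hπk] with ω h1 h2
    rw [h1, h2, div_mul_div_comm, div_eq_inv_mul]
    ring
  have c1 : μ[fun ω => Yj ω * Ij ω / πj ω | mX] =ᵐ[μ]
      fun ω => ((μ[Ij | mX]) ω)⁻¹ * ((μ[Yj | mX]) ω * (μ[Ij | mX]) ω) := by
    refine (condExp_congr_ae g1).trans ?_
    refine (condExp_mul_of_stronglyMeasurable_left hsma (hYsjint.congr g1) hYjIj).trans ?_
    filter_upwards [e1] with ω hω
    simp only [Pi.mul_apply]
    rw [hω]
  have c2 : μ[fun ω => Yk ω * Ik ω / πk ω | mX] =ᵐ[μ]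
      fun ω => ((μ[Ik | mX]) ω)⁻¹ * ((μ[Yk | mX]) ω * (μ[Ik | mX]) ω) := by
    refine (condExp_congr_ae g2).trans ?_
    refine (condExp_mul_of_stronglyMeasurable_left hsmb (hYskint.congr g2) hYkIk).trans ?_
    filter_upwards [e2] with ω hω
    simp only [Pi.mul_apply]
    rw [hω]
  have c3 : μ[fun ω => (Yj ω * Ij ω / πj ω) * (Yk ω * Ik ω / πk ω) | mX] =ᵐ[μ]
      fun ω => ((μ[Ij | mX]) ω * (μ[Ik | mX]) ω)⁻¹
        * ((μ[fun ω' => Yj ω' * Yk ω' | mX]) ω * (μ[fun ω' => Ij ω' * Ik ω' | mX]) ω) := by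
    refine (condExp_congr_ae g3).trans ?_
    refine (condExp_mul_of_stronglyMeasurable_left hsmab (hYsjkint.congr g3) hprodint).trans ?_
    filter_upwards [e3] with ω hω
    simp only [Pi.mul_apply]
    rw [hω]
  -- final pointwise computation
  filter_upwards [c1, c2, c3, hπj, hπk, hπjpos, hπkpos, hq, hμj, hμk, hσjk]
    with ω h1 h2 h3 hjω hkω hjpos hkpos hqω hμjω hμkω hσω
  rw [h3, h1, h2, hσω, hμjω, hμkω, hqω, hjω, hkω]
  have ha : (μ[Ij | mX]) ω ≠ 0 := by rw [← hjω]; exact ne_of_gt hjpos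
  have hb : (μ[Ik | mX]) ω ≠ 0 := by rw [← hkω]; exact ne_of_gt hkpos
  field_simp
  ring
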